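/- arXiv:1302.6545 — 2 statements merged into one kernel-verified Lean document; each statement's English description precedes it below -/
import Mathlib

section
/- Let φ : [0, ∞) → ℝ be C² and suppose there exist constants C, C₀ > 0 such that |φ(t)| ≤ C(1+t)e^{-t} and φ''(t) ≤ C₀ for all t ≥ 0 (writing φ' for dφ/dt). Then for every η with 0 < η < 1/2 there exists a constant C' such that φ'(t) ≥ -C' e^{-η t} for all t ≥ 0. -/
/-!
A second-order Taylor bound with the one-sided estimate `φ'' ≤ C₀` gives, for every step
`h > 0`, `φ'(t) ≥ (φ(t + h) - φ(t)) / h - C₀ h / 2 ≥ -2C(1 + t)e^{-t} / h - C₀ h / 2`.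
The step `h = e^{-ηt}` balances the two terms: the first becomes
`-2C (1 + t) e^{-(1 - 2η)t} · e^{-ηt}`, and `(1 + t) e^{-(1 - 2η)t}` is bounded because `2η < 1`.
-/

open Real Set

theorem sub_le_mul_sub_of_hasDerivAt_le {f f' : ℝ → ℝ} {a B : ℝ}
    (hf : ∀ x, a ≤ x → HasDerivAt f (f' x) x) (hB : ∀ x, a ≤ x → f' x ≤ B)
    {s t : ℝ} (hs : a ≤ s) (hst : s ≤ t) : f t - f s ≤ B * (t - s) := by
  have hf_int : ∀ x ∈ interior (Ici a), HasDerivAt f (f' x) x := fun x hx =>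
    hf x (interior_subset hx)
  refine (convex_Ici a).image_sub_le_mul_sub_of_deriv_le
    (fun x hx => (hf x hx).continuousAt.continuousWithinAt)
    (fun x hx => (hf_int x hx).differentiableAt.differentiableWithinAt)
    (fun x hx => ?_) s hs t (hs.trans hst) hst
  rw [(hf_int x hx).deriv]
  exact hB x (interior_subset hx)

theorem sub_le_deriv_mul_add_of_deriv2_le {f f' f'' : ℝ → ℝ} {a B t h : ℝ}
    (hf : ∀ x, a ≤ x → HasDerivAt f (f' x) x) (hf' : ∀ x, a ≤ x → HasDerivAt f' (f'' x) x)
    (hB : ∀ x, a ≤ x → f'' x ≤ B) (ht : a ≤ t) (hh : 0 ≤ h) :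
    f (t + h) - f t ≤ f' t * h + B * h ^ 2 / 2 := by
  set g : ℝ → ℝ := fun x => f x - f' t * x - B * (x - t) ^ 2 / 2
  have hg : ∀ x, t ≤ x → HasDerivAt g (f' x - f' t - B * (x - t)) x := by
    intro x hx
    refine (((hf x (ht.trans hx)).sub ((hasDerivAt_id' x).const_mul (f' t))).sub
      (((((hasDerivAt_id' x).sub_const t).fun_pow 2).const_mul B).div_const 2)).congr_deriv ?_
    ring
  have hg_nonpos : ∀ x, t ≤ x → f' x - f' t - B * (x - t) ≤ 0 := fun x hx => by
    linarith [sub_le_mul_sub_of_hasDerivAt_le hf' hB ht hx]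
  have hg_le := sub_le_mul_sub_of_hasDerivAt_le hg hg_nonpos le_rfl (le_add_of_nonneg_right hh)
  simp only [g, add_sub_cancel_left, sub_self] at hg_le
  linarith

theorem div_sub_le_deriv_of_deriv2_le {f f' f'' : ℝ → ℝ} {a B t h : ℝ}
    (hf : ∀ x, a ≤ x → HasDerivAt f (f' x) x) (hf' : ∀ x, a ≤ x → HasDerivAt f' (f'' x) x)
    (hB : ∀ x, a ≤ x → f'' x ≤ B) (ht : a ≤ t) (hh : 0 < h) :
    (f (t + h) - f t) / h - B * h / 2 ≤ f' t := by
  have := sub_le_deriv_mul_add_of_deriv2_le hf hf' hB ht hh.le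
  rw [sub_le_iff_le_add, div_le_iff₀ hh]
  nlinarith

theorem one_add_mul_exp_neg_le_of_le {s u : ℝ} (hs : 0 ≤ s) (hsu : s ≤ u) :
    (1 + u) * exp (-u) ≤ (1 + s) * exp (-s) := by
  have hgrow : 1 + u ≤ (1 + s) * exp (u - s) := by
    nlinarith [add_one_le_exp (u - s)]
  calc (1 + u) * exp (-u) ≤ (1 + s) * exp (u - s) * exp (-u) := by gcongr
    _ = (1 + s) * exp (-s) := by rw [mul_assoc, ← exp_add]; ring_nf

theorem one_add_mul_exp_neg_mul_le {ε t : ℝ} (hε : 0 < ε) (ht : 0 ≤ t) :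
    (1 + t) * exp (-(ε * t)) ≤ 1 + 1 / ε := by
  have hgrow : 1 + t ≤ (1 + 1 / ε) * exp (ε * t) := by
    have hlin : 1 + t ≤ (1 + 1 / ε) * (ε * t + 1) := by
      have : (1 + 1 / ε) * (ε * t + 1) = 1 + t + 1 / ε + ε * t := by field_simp; ring
      rw [this]
      linarith [mul_nonneg hε.le ht, one_div_pos.2 hε]
    exact hlin.trans (by gcongr; exact add_one_le_exp _)
  calc (1 + t) * exp (-(ε * t)) ≤ (1 + 1 / ε) * exp (ε * t) * exp (-(ε * t)) := by gcongr
    _ = 1 + 1 / ε := by rw [mul_assoc, ← exp_add, add_neg_cancel, exp_zero, mul_one]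

theorem phidot_lower_decay_general
    (φ φ' φ'' : ℝ → ℝ) (C C₀ : ℝ) (hC : 0 < C)
    (hd1 : ∀ t, 0 ≤ t → HasDerivAt φ (φ' t) t)
    (hd2 : ∀ t, 0 ≤ t → HasDerivAt φ' (φ'' t) t)
    (hφ : ∀ t, 0 ≤ t → |φ t| ≤ C * (1 + t) * Real.exp (-t))
    (hφ'' : ∀ t, 0 ≤ t → φ'' t ≤ C₀) :
    ∀ η : ℝ, 0 < η → η < 1 / 2 →
      ∃ C' : ℝ, ∀ t, 0 ≤ t → -C' * Real.exp (-η * t) ≤ φ' t := by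
  intro η hη hη_half
  set ε := 1 - 2 * η
  have hε : 0 < ε := by linarith
  refine ⟨2 * C * (1 + 1 / ε) + C₀ / 2, fun t ht => ?_⟩
  set h := exp (-η * t)
  have hh : 0 < h := exp_pos _
  have hsplit : exp (-t) = exp (-(ε * t)) * h * h := by
    simp only [h, ε, ← exp_add]; ring_nf
  have hφ_sum : |φ t| + |φ (t + h)| ≤ 2 * C * ((1 + t) * exp (-t)) := by
    have := hφ (t + h) (by positivity)
    have := one_add_mul_exp_neg_le_of_le ht (le_add_of_nonneg_right hh.le)
    nlinarith [hφ t ht]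
  calc -(2 * C * (1 + 1 / ε) + C₀ / 2) * h
      ≤ -(2 * C * ((1 + t) * exp (-(ε * t)))) * h - C₀ * h / 2 := by
        have := mul_le_mul_of_nonneg_left (one_add_mul_exp_neg_mul_le hε ht)
          (by positivity : 0 ≤ 2 * C * h)
        linarith
    _ = -(2 * C * ((1 + t) * exp (-t))) / h - C₀ * h / 2 := by
        rw [hsplit]; field_simp
    _ ≤ -(|φ t| + |φ (t + h)|) / h - C₀ * h / 2 := by gcongr
    _ ≤ (φ (t + h) - φ t) / h - C₀ * h / 2 := by
        gcongr
        linarith [neg_abs_le (φ (t + h)), le_abs_self (φ t)]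
    _ ≤ φ' t := div_sub_le_deriv_of_deriv2_le hd1 hd2 hφ'' ht hh

/-- Lower-bound half of the exponential decay of `φ̇`: if `|φ(t)| ≤ C(1+t)e^{-t}`
and `φ'' ≤ C₀`, then for every `0 < η < 1/2` one has `φ' ≥ -C' e^{-ηt}`. -/
theorem phidot_lower_decay
    (φ φ' φ'' : ℝ → ℝ) (C C₀ : ℝ) (hC : 0 < C) (hC₀ : 0 < C₀)
    (hd1 : ∀ t, 0 ≤ t → HasDerivAt φ (φ' t) t)
    (hd2 : ∀ t, 0 ≤ t → HasDerivAt φ' (φ'' t) t)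
    (hφ : ∀ t, 0 ≤ t → |φ t| ≤ C * (1 + t) * Real.exp (-t))
    (hφ'' : ∀ t, 0 ≤ t → φ'' t ≤ C₀) :
    ∀ η : ℝ, 0 < η → η < 1 / 2 →
      ∃ C' : ℝ, ∀ t, 0 ≤ t → -C' * Real.exp (-η * t) ≤ φ' t :=
  phidot_lower_decay_general φ φ' φ'' C C₀ hC hd1 hd2 hφ hφ''
end

section
/- Let φ : [0, ∞) → ℝ be C² with |φ(t)| ≤ C(1+t)e^{-t} for all t, and suppose φ''(t) ≥ -C₀ e^{t'/2} for all t' ≥ 0 and t ∈ [t', t'+1]. Then for every σ with 0 < σ < 1/4 there exists a constant C' such that φ'(t) ≤ C' e^{-σ t} for all t ≥ 0. -/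
/-!
On `[t, t + δ]` the bound `φ'' ≥ -K` with `K = C₀ e^{t/2}` gives the Taylor estimate
`φ'(t) δ ≤ φ(t + δ) - φ(t) + K δ² / 2`, while the decay of `φ` bounds the difference quotient by
`2C(2 + t) e^{-t} / δ`. The step `δ = e^{-(σ + 1/2) t}` balances the two terms: the curvature term
becomes `(C₀/2) e^{-σt}` and the difference quotient `2C(2 + t) e^{-(1/2 - 2σ) t} e^{-σt}`,
whose polynomial factor is absorbed because `1/2 - 2σ > 0`.
-/

open Real Set

theorem monotoneOn_Icc_of_hasDerivAt_nonneg {f f' : ℝ → ℝ} {a b : ℝ}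
    (hf : ∀ x ∈ Icc a b, HasDerivAt f (f' x) x) (hf' : ∀ x ∈ Ioo a b, 0 ≤ f' x) :
    MonotoneOn f (Icc a b) :=
  monotoneOn_of_hasDerivWithinAt_nonneg (convex_Icc a b)
    (fun x hx ↦ (hf x hx).continuousAt.continuousWithinAt)
    (fun x hx ↦ (hf x (interior_subset hx)).hasDerivWithinAt)
    (fun x hx ↦ hf' x (by rwa [interior_Icc] at hx))

theorem deriv_mul_sub_le_of_neg_le_deriv2 {f f' f'' : ℝ → ℝ} {a b K : ℝ} (hab : a ≤ b)
    (hf : ∀ x ∈ Icc a b, HasDerivAt f (f' x) x) (hf' : ∀ x ∈ Icc a b, HasDerivAt f' (f'' x) x)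
    (hK : ∀ x ∈ Ioo a b, -K ≤ f'' x) :
    f' a * (b - a) ≤ f b - f a + K * (b - a) ^ 2 / 2 := by
  have ha : a ∈ Icc a b := left_mem_Icc.2 hab
  have hslope : ∀ x ∈ Icc a b, f' a + K * a ≤ f' x + K * x := fun x hx ↦
    monotoneOn_Icc_of_hasDerivAt_nonneg (f' := fun x ↦ f'' x + K)
      (fun x hx ↦ (hf' x hx).add ((hasDerivAt_id x).const_mul K |>.congr_deriv (mul_one K)))
      (fun x hx ↦ by linarith [hK x hx]) ha hx hx.1
  have hmono := monotoneOn_Icc_of_hasDerivAt_nonneg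
    (f := fun x ↦ f x - f' a * x + K * (x - a) ^ 2 / 2)
    (f' := fun x ↦ f' x - f' a + K * (x - a))
    (fun x hx ↦ (((hf x hx).sub ((hasDerivAt_id x).const_mul (f' a))).add
      (((((hasDerivAt_id x).sub_const a).pow 2).const_mul K).div_const 2)).congr_deriv
      (by simp only [id]; ring))
    (fun x hx ↦ by linarith [hslope x (Ioo_subset_Icc_self hx)])
    ha (right_mem_Icc.2 hab) hab
  norm_num at hmono
  linarith

theorem mul_exp_le_two_add_inv {a t : ℝ} (ha : 0 < a) (ht : 0 ≤ t) :
    (2 + t) * exp (-(a * t)) ≤ 2 + a⁻¹ := by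
  have hexp : exp (-(a * t)) ≤ 1 := exp_le_one_iff.2 (by nlinarith)
  have hpoly : t * exp (-(a * t)) ≤ a⁻¹ := by
    calc t * exp (-(a * t)) = a⁻¹ * (a * t * exp (-(a * t))) := by field_simp
      _ ≤ a⁻¹ * 1 := by
        gcongr
        exact (mul_exp_neg_le_exp_neg_one (a * t)).trans (exp_le_one_iff.2 (by norm_num))
      _ = a⁻¹ := mul_one _
  nlinarith

theorem mul_one_add_mul_exp_neg_le_of_mem_Icc {C t s : ℝ} (hC : 0 ≤ C) (ht : 0 ≤ t)
    (hs : s ∈ Icc t (t + 1)) :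
    C * (1 + s) * exp (-s) ≤ C * (2 + t) * exp (-t) := by
  have hexp : exp (-s) ≤ exp (-t) := exp_le_exp.2 (by linarith [hs.1])
  exact mul_le_mul (mul_le_mul_of_nonneg_left (by linarith [hs.2]) hC) hexp (exp_pos _).le
    (mul_nonneg hC (by linarith))

theorem deriv_mul_le_of_abs_le_of_neg_le_deriv2 {f f' f'' : ℝ → ℝ} {C K t δ : ℝ} (hC : 0 ≤ C)
    (ht : 0 ≤ t) (hδ : 0 ≤ δ) (hδ1 : δ ≤ 1)
    (hf : ∀ x ∈ Icc t (t + δ), HasDerivAt f (f' x) x)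
    (hf' : ∀ x ∈ Icc t (t + δ), HasDerivAt f' (f'' x) x)
    (hK : ∀ x ∈ Ioo t (t + δ), -K ≤ f'' x)
    (hdecay : ∀ s, 0 ≤ s → |f s| ≤ C * (1 + s) * exp (-s)) :
    f' t * δ ≤ 2 * C * (2 + t) * exp (-t) + K * δ ^ 2 / 2 := by
  have htaylor := deriv_mul_sub_le_of_neg_le_deriv2 (by linarith) hf hf' hK
  have hright : f (t + δ) ≤ C * (2 + t) * exp (-t) :=
    (le_abs_self _).trans <| (hdecay _ (by linarith)).trans <|
      mul_one_add_mul_exp_neg_le_of_mem_Icc hC ht ⟨by linarith, by linarith⟩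
  have hleft : -f t ≤ C * (2 + t) * exp (-t) :=
    (neg_le_abs _).trans <| (hdecay t ht).trans <|
      mul_one_add_mul_exp_neg_le_of_mem_Icc hC ht ⟨le_rfl, by linarith⟩
  simp only [add_sub_cancel_left] at htaylor
  linarith

theorem phidot_upper_decay_general
    (φ φ' φ'' : ℝ → ℝ) (C C₀ : ℝ)
    (hd1 : ∀ t, 0 ≤ t → HasDerivAt φ (φ' t) t)
    (hd2 : ∀ t, 0 ≤ t → HasDerivAt φ' (φ'' t) t)
    (hφ : ∀ t, 0 ≤ t → |φ t| ≤ C * (1 + t) * Real.exp (-t))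
    (hφ'' : ∀ t', 0 ≤ t' → ∀ t ∈ Set.Icc t' (t' + 1), -C₀ * Real.exp (t' / 2) ≤ φ'' t) :
    ∀ σ : ℝ, 0 < σ → σ < 1 / 4 →
      ∃ C' : ℝ, ∀ t, 0 ≤ t → φ' t ≤ C' * Real.exp (-σ * t) := by
  intro σ hσ hσ4
  have hC : 0 ≤ C := by simpa using (abs_nonneg _).trans (hφ 0 le_rfl)
  have ha : 0 < 1 / 2 - 2 * σ := by linarith
  refine ⟨2 * C * (2 + (1 / 2 - 2 * σ)⁻¹) + C₀ / 2, fun t ht ↦ ?_⟩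
  set δ := exp (-(σ + 1 / 2) * t)
  have hδ : 0 < δ := exp_pos _
  have hδ1 : δ ≤ 1 := exp_le_one_iff.2 (by nlinarith)
  have hstep := deriv_mul_le_of_abs_le_of_neg_le_deriv2 (K := C₀ * exp (t / 2)) hC ht hδ.le hδ1
    (fun x hx ↦ hd1 x (ht.trans hx.1)) (fun x hx ↦ hd2 x (ht.trans hx.1))
    (fun x hx ↦ by linarith [hφ'' t ht x ⟨hx.1.le, by linarith [hx.2]⟩]) hφ
  have hcurv : exp (t / 2) * δ ^ 2 = exp (-σ * t) * δ := by
    rw [sq, ← exp_add, ← exp_add, ← exp_add]; ring_nf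
  have hdiff : exp (-t) = exp (-((1 / 2 - 2 * σ) * t)) * (exp (-σ * t) * δ) := by
    rw [← exp_add, ← exp_add]; ring_nf
  have hpoly := mul_exp_le_two_add_inv ha ht
  rw [← mul_le_mul_iff_of_pos_right hδ]
  calc φ' t * δ ≤ 2 * C * (2 + t) * exp (-t) + C₀ / 2 * (exp (t / 2) * δ ^ 2) := by linarith
    _ = 2 * C * ((2 + t) * exp (-((1 / 2 - 2 * σ) * t))) * (exp (-σ * t) * δ)
        + C₀ / 2 * (exp (-σ * t) * δ) := by rw [hdiff, hcurv]; ring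
    _ ≤ (2 * C * (2 + (1 / 2 - 2 * σ)⁻¹) + C₀ / 2) * exp (-σ * t) * δ := by
        have hscaled := mul_le_mul_of_nonneg_right
          (mul_le_mul_of_nonneg_left hpoly (by positivity : 0 ≤ 2 * C))
          (mul_pos (exp_pos (-σ * t)) hδ).le
        linarith

/-- Upper-bound half of the exponential decay of `φ̇`: if `|φ(t)| ≤ C(1+t)e^{-t}`
and `φ'' ≥ -C₀ e^{t'/2}` on each interval `[t', t'+1]`, then for every
`0 < σ < 1/4` one has `φ' ≤ C' e^{-σt}`. -/
theorem phidot_upper_decay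
    (φ φ' φ'' : ℝ → ℝ) (C C₀ : ℝ) (hC : 0 < C) (hC₀ : 0 < C₀)
    (hd1 : ∀ t, 0 ≤ t → HasDerivAt φ (φ' t) t)
    (hd2 : ∀ t, 0 ≤ t → HasDerivAt φ' (φ'' t) t)
    (hφ : ∀ t, 0 ≤ t → |φ t| ≤ C * (1 + t) * Real.exp (-t))
    (hφ'' : ∀ t', 0 ≤ t' → ∀ t ∈ Set.Icc t' (t' + 1), -C₀ * Real.exp (t' / 2) ≤ φ'' t) :
    ∀ σ : ℝ, 0 < σ → σ < 1 / 4 →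
      ∃ C' : ℝ, ∀ t, 0 ≤ t → φ' t ≤ C' * Real.exp (-σ * t) :=
  phidot_upper_decay_general φ φ' φ'' C C₀ hd1 hd2 hφ hφ''
end
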